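/- arXiv:2002.06476 — 2 statements merged into one kernel-verified Lean document; each statement's English description precedes it below -/
import Mathlib

section
/- (Theorem 1 of the paper.) Let Φ and Ω be finite nonempty strategy sets, L : Φ × Ω → ℝ, and let (p*, q*) be a fully mixed Nash equilibrium of the associated zero-sum game. Let p : ℝ → Φ → ℝ and q : ℝ → Ω → ℝ be differentiable curves such that for all t: p(t,φ) > 0, q(t,ω) > 0, Σ_φ p(t,φ) = 1, Σ_ω q(t,ω) = 1, and they satisfy the replicator dynamics d/dt p(t,φ) = p(t,φ)·(u_π(t,φ) − Σ_{φ'} p(t,φ')u_π(t,φ')) and d/dt q(t,ω) = q(t,ω)·(u_D(t,ω) − Σ_{ω'} q(t,ω')u_D(t,ω')), where u_π(t,φ) = Σ_ω q(t,ω)L(φ,ω) and u_D(t,ω) = −Σ_φ p(t,φ)L(φ,ω). Then the cross entropy H(t) = −Σ_φ p*(φ)·ln p(t,φ) − Σ_ω q*(ω)·ln q(t,ω) is constant in t; equivalently, its derivative is identically zero. -/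
/-!
At a fully mixed equilibrium every pure strategy of either player earns exactly the value
`V = E(p*, q*)`, so `E(p, q*) = E(p*, q) = V` for all mixed `p, q`. Under the replicator
dynamics `(ln p φ)' = u_π(φ) - E(p, q)`, so the rate of change of `-∑ p* ln p` is
`E(p, q) - E(p*, q)`, and likewise that of `-∑ q* ln q` is `E(p, q*) - E(p, q)`.
The total rate is `E(p, q*) - E(p*, q) = V - V = 0`.
-/

open Finset

/-- A mixed strategy on a finite strategy set: nonnegative weights summing to 1. -/
def IsMixed {Φ : Type*} [Fintype Φ] (p : Φ → ℝ) : Prop :=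
  (∀ φ, 0 ≤ p φ) ∧ ∑ φ, p φ = 1

/-- Expected payoff of the zero-sum game with payoff `L` under mixed strategies `p, q`. -/
def expPay {Φ Ω : Type*} [Fintype Φ] [Fintype Ω] (L : Φ → Ω → ℝ)
    (p : Φ → ℝ) (q : Ω → ℝ) : ℝ :=
  ∑ φ, ∑ ω, p φ * q ω * L φ ω

theorem eq_of_le_of_sum_mul_eq {ι : Type*} [Fintype ι] {w f : ι → ℝ} {c : ℝ}
    (hw : ∀ i, 0 < w i) (hw₁ : ∑ i, w i = 1) (hf : ∀ i, f i ≤ c)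
    (h : ∑ i, w i * f i = c) (i : ι) : f i = c := by
  have hc : ∑ i, w i * f i = ∑ i, w i * c := by rw [h, ← sum_mul, hw₁, one_mul]
  have := (sum_eq_sum_iff_of_le fun j _ => mul_le_mul_of_nonneg_left (hf j) (hw j).le).1 hc i
    (mem_univ i)
  exact mul_left_cancel₀ (hw i).ne' this

section Payoff

variable {Φ Ω : Type*} [Fintype Φ] [Fintype Ω]

theorem expPay_eq_sum_row (L : Φ → Ω → ℝ) (p : Φ → ℝ) (q : Ω → ℝ) :
    expPay L p q = ∑ φ, p φ * ∑ ω, q ω * L φ ω := by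
  simp only [expPay, mul_sum, mul_assoc, mul_left_comm (p _)]

theorem expPay_eq_sum_col (L : Φ → Ω → ℝ) (p : Φ → ℝ) (q : Ω → ℝ) :
    expPay L p q = ∑ ω, q ω * ∑ φ, p φ * L φ ω := by
  rw [expPay, sum_comm]
  simp only [mul_sum, mul_assoc, mul_left_comm (q _)]

/-- The column player's game: `-L` with the roles of the players exchanged. -/
theorem expPay_neg_swap (L : Φ → Ω → ℝ) (p : Φ → ℝ) (q : Ω → ℝ) :
    expPay (fun ω φ => -L φ ω) q p = -expPay L p q := by
  rw [expPay_eq_sum_row, expPay_eq_sum_col, ← sum_neg_distrib]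
  simp only [mul_neg, sum_neg_distrib]

theorem isMixed_pi_single [DecidableEq Φ] (φ : Φ) : IsMixed (Pi.single φ (1 : ℝ)) :=
  ⟨fun φ' => by by_cases h : φ' = φ <;> simp [h], by simp⟩

theorem expPay_pi_single_left [DecidableEq Φ] (L : Φ → Ω → ℝ) (φ : Φ) (q : Ω → ℝ) :
    expPay L (Pi.single φ 1) q = ∑ ω, q ω * L φ ω := by
  simp [expPay_eq_sum_row, Pi.single_apply]

end Payoff

section Equilibrium

variable {Φ Ω : Type*} [Fintype Φ] [Fintype Ω] {L : Φ → Ω → ℝ} {pstar : Φ → ℝ} {qstar : Ω → ℝ}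

theorem pure_row_payoff_eq_expPay (hpfull : ∀ φ, 0 < pstar φ) (hpsum : ∑ φ, pstar φ = 1)
    (hNE : ∀ p : Φ → ℝ, IsMixed p → expPay L p qstar ≤ expPay L pstar qstar) (φ : Φ) :
    ∑ ω, qstar ω * L φ ω = expPay L pstar qstar := by
  classical
  refine eq_of_le_of_sum_mul_eq hpfull hpsum (fun φ => ?_) (expPay_eq_sum_row L pstar qstar).symm φ
  rw [← expPay_pi_single_left]
  exact hNE _ (isMixed_pi_single φ)

theorem expPay_left_eq_of_fully_mixed (hpfull : ∀ φ, 0 < pstar φ) (hpsum : ∑ φ, pstar φ = 1)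
    (hNE : ∀ p : Φ → ℝ, IsMixed p → expPay L p qstar ≤ expPay L pstar qstar)
    {p : Φ → ℝ} (hp : ∑ φ, p φ = 1) :
    expPay L p qstar = expPay L pstar qstar := by
  simp only [expPay_eq_sum_row L p, pure_row_payoff_eq_expPay hpfull hpsum hNE, ← sum_mul, hp,
    one_mul]

theorem expPay_right_eq_of_fully_mixed (hqfull : ∀ ω, 0 < qstar ω) (hqsum : ∑ ω, qstar ω = 1)
    (hNE : ∀ q : Ω → ℝ, IsMixed q → expPay L pstar qstar ≤ expPay L pstar q)
    {q : Ω → ℝ} (hq : ∑ ω, q ω = 1) :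
    expPay L pstar q = expPay L pstar qstar := by
  have hswap := expPay_left_eq_of_fully_mixed (L := fun ω φ => -L φ ω) (qstar := pstar) hqfull
    hqsum (fun q hq => by simpa only [expPay_neg_swap, neg_le_neg_iff] using hNE q hq) hq
  simpa only [expPay_neg_swap, neg_inj] using hswap

end Equilibrium

theorem hasDerivAt_sum_mul_log_of_replicator {ι : Type*} [Fintype ι] (w : ι → ℝ)
    (hw : ∑ i, w i = 1) (x : ℝ → ι → ℝ) (u : ι → ℝ) (t : ℝ) (hx : ∀ i, 0 < x t i)
    (hdyn : ∀ i, HasDerivAt (fun s => x s i) (x t i * (u i - ∑ j, x t j * u j)) t) :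
    HasDerivAt (fun s => ∑ i, w i * Real.log (x s i))
      (∑ i, w i * u i - ∑ i, x t i * u i) t := by
  have hlog : ∀ i, HasDerivAt (fun s => Real.log (x s i)) (u i - ∑ j, x t j * u j) t := by
    intro i
    simpa only [mul_div_cancel_left₀ _ (hx i).ne'] using (hdyn i).log (hx i).ne'
  refine (HasDerivAt.fun_sum fun i _ => (hlog i).const_mul (w i)).congr_deriv ?_
  simp only [mul_sub, sum_sub_distrib, ← sum_mul, hw, one_mul]

theorem cross_entropy_constant_replicator_general
    {Φ Ω : Type*} [Fintype Φ] [Fintype Ω]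
    (L : Φ → Ω → ℝ) (pstar : Φ → ℝ) (qstar : Ω → ℝ)
    (hpmix : IsMixed pstar) (hqmix : IsMixed qstar)
    (hpfull : ∀ φ, 0 < pstar φ) (hqfull : ∀ ω, 0 < qstar ω)
    (hNE₁ : ∀ p : Φ → ℝ, IsMixed p → expPay L p qstar ≤ expPay L pstar qstar)
    (hNE₂ : ∀ q : Ω → ℝ, IsMixed q → expPay L pstar qstar ≤ expPay L pstar q)
    (p : ℝ → Φ → ℝ) (q : ℝ → Ω → ℝ)
    (hppos : ∀ t φ, 0 < p t φ) (hqpos : ∀ t ω, 0 < q t ω)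
    (hpsum : ∀ t, ∑ φ, p t φ = 1) (hqsum : ∀ t, ∑ ω, q t ω = 1)
    (hpdyn : ∀ t φ, HasDerivAt (fun s => p s φ)
      (p t φ * ((∑ ω, q t ω * L φ ω) - ∑ φ', p t φ' * ∑ ω, q t ω * L φ' ω)) t)
    (hqdyn : ∀ t ω, HasDerivAt (fun s => q s ω)
      (q t ω * ((-∑ φ, p t φ * L φ ω) - ∑ ω', q t ω' * (-∑ φ, p t φ * L φ ω'))) t) :
    (∀ t t' : ℝ,
      (-∑ φ, pstar φ * Real.log (p t φ)) - ∑ ω, qstar ω * Real.log (q t ω) =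
      (-∑ φ, pstar φ * Real.log (p t' φ)) - ∑ ω, qstar ω * Real.log (q t' ω)) ∧
    (∀ t : ℝ, HasDerivAt
      (fun s => (-∑ φ, pstar φ * Real.log (p s φ)) - ∑ ω, qstar ω * Real.log (q s ω))
      0 t) := by
  have hderiv : ∀ t, HasDerivAt
      (fun s => (-∑ φ, pstar φ * Real.log (p s φ)) - ∑ ω, qstar ω * Real.log (q s ω)) 0 t := by
    intro t
    have hP := hasDerivAt_sum_mul_log_of_replicator pstar hpmix.2 p _ t (hppos t) (hpdyn t)
    have hQ := hasDerivAt_sum_mul_log_of_replicator qstar hqmix.2 q _ t (hqpos t) (hqdyn t)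
    refine (hP.fun_neg.fun_sub hQ).congr_deriv ?_
    simp only [mul_neg, sum_neg_distrib]
    rw [← expPay_eq_sum_row L pstar (q t), ← expPay_eq_sum_row L (p t) (q t),
      ← expPay_eq_sum_col L (p t) qstar, ← expPay_eq_sum_col L (p t) (q t),
      expPay_left_eq_of_fully_mixed hpfull hpmix.2 hNE₁ (hpsum t),
      expPay_right_eq_of_fully_mixed hqfull hqmix.2 hNE₂ (hqsum t)]
    ring
  exact ⟨fun t t' => is_const_of_deriv_eq_zero (fun s => (hderiv s).differentiableAt)
    (fun s => (hderiv s).deriv) t t', hderiv⟩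

/-- Theorem 1: along any positive solution of the (continuous-time multiplicative weights,
i.e. replicator) dynamics of a finite zero-sum game with fully mixed Nash equilibrium
`(p*, q*)`, the cross entropy
`H(t) = -∑ φ, p* φ * ln (p t φ) - ∑ ω, q* ω * ln (q t ω)` is constant in `t`;
equivalently its time derivative is identically zero. -/
theorem cross_entropy_constant_replicator
    {Φ Ω : Type*} [Fintype Φ] [Fintype Ω] [Nonempty Φ] [Nonempty Ω]
    (L : Φ → Ω → ℝ) (pstar : Φ → ℝ) (qstar : Ω → ℝ)
    (hpmix : IsMixed pstar) (hqmix : IsMixed qstar)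
    (hpfull : ∀ φ, 0 < pstar φ) (hqfull : ∀ ω, 0 < qstar ω)
    (hNE₁ : ∀ p : Φ → ℝ, IsMixed p → expPay L p qstar ≤ expPay L pstar qstar)
    (hNE₂ : ∀ q : Ω → ℝ, IsMixed q → expPay L pstar qstar ≤ expPay L pstar q)
    (p : ℝ → Φ → ℝ) (q : ℝ → Ω → ℝ)
    (hppos : ∀ t φ, 0 < p t φ) (hqpos : ∀ t ω, 0 < q t ω)
    (hpsum : ∀ t, ∑ φ, p t φ = 1) (hqsum : ∀ t, ∑ ω, q t ω = 1)
    (hpdyn : ∀ t φ, HasDerivAt (fun s => p s φ)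
      (p t φ * ((∑ ω, q t ω * L φ ω) - ∑ φ', p t φ' * ∑ ω, q t ω * L φ' ω)) t)
    (hqdyn : ∀ t ω, HasDerivAt (fun s => q s ω)
      (q t ω * ((-∑ φ, p t φ * L φ ω) - ∑ ω', q t ω' * (-∑ φ, p t φ * L φ ω'))) t) :
    (∀ t t' : ℝ,
      (-∑ φ, pstar φ * Real.log (p t φ)) - ∑ ω, qstar ω * Real.log (q t ω) =
      (-∑ φ, pstar φ * Real.log (p t' φ)) - ∑ ω, qstar ω * Real.log (q t' ω)) ∧
    (∀ t : ℝ, HasDerivAt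
      (fun s => (-∑ φ, pstar φ * Real.log (p s φ)) - ∑ ω, qstar ω * Real.log (q s ω))
      0 t) :=
  cross_entropy_constant_replicator_general L pstar qstar hpmix hqmix hpfull hqfull hNE₁ hNE₂ p q
    hppos hqpos hpsum hqsum hpdyn hqdyn
end

section
/- (KL-divergence derivative along replicator dynamics.) Let Φ be a finite nonempty set, p* : Φ → ℝ a fixed probability vector, and p : ℝ → Φ → ℝ a differentiable curve with p(t,φ) > 0 for all t, φ, satisfying d/dt p(t,φ) = p(t,φ)·(u(t,φ) − Σ_{φ'} p(t,φ')u(t,φ')) for a continuous time-dependent payoff u : ℝ × Φ → ℝ. Then d/dt [Σ_φ p*(φ)·ln(p*(φ)/p(t,φ))] = Σ_φ p(t,φ)·u(t,φ) − Σ_φ p*(φ)·u(t,φ). -/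
open Finset

/-! The only `s`-dependent part of `p*(φ) ln(p*(φ)/p(s,φ))` is `-p*(φ) ln p(s,φ)`, and along the
replicator dynamics `d/dt ln p(t,φ) = u(t,φ) - ū(t)` with `ū = ∑ p u` the mean payoff. Summing
against `p*` and using `∑ p* = 1` gives `ū(t) - ∑ p* u`. -/

/-- Valid also for `c = 0`, where both sides vanish although `Real.log 0 = 0` breaks `log_div`. -/
theorem Real.mul_log_div_eq_sub {x : ℝ} (c : ℝ) (hx : x ≠ 0) :
    c * Real.log (c / x) = c * Real.log c - c * Real.log x := by
  rcases eq_or_ne c 0 with rfl | hc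
  · simp
  · rw [Real.log_div hc hx, mul_sub]

theorem HasDerivAt.log_of_hasDerivAt_mul_self {f : ℝ → ℝ} {g t : ℝ}
    (hf : HasDerivAt f (f t * g) t) (ht : f t ≠ 0) :
    HasDerivAt (fun s => Real.log (f s)) g t := by
  simpa [mul_div_cancel_left₀ g ht] using hf.log ht

theorem HasDerivAt.const_mul_log_const_div_of_mul_self {f : ℝ → ℝ} {g t : ℝ} (c : ℝ)
    (hf : HasDerivAt f (f t * g) t) (ht : f t ≠ 0) :
    HasDerivAt (fun s => c * Real.log (c / f s)) (-(c * g)) t := by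
  have hsplit : (fun s => c * Real.log c - c * Real.log (f s)) =ᶠ[nhds t]
      fun s => c * Real.log (c / f s) :=
    (hf.continuousAt.eventually_ne ht).mono fun s hs => (Real.mul_log_div_eq_sub c hs).symm
  simpa using (((hf.log_of_hasDerivAt_mul_self ht).const_mul c).const_sub
    (c * Real.log c)).congr_of_eventuallyEq hsplit.symm

theorem Finset.sum_neg_mul_sub_const {ι : Type*} (s : Finset ι) (q v : ι → ℝ) {c : ℝ}
    (hq : ∑ i ∈ s, q i = 1) :
    ∑ i ∈ s, -(q i * (v i - c)) = c - ∑ i ∈ s, q i * v i := by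
  simp only [mul_sub, neg_sub, sum_sub_distrib, ← sum_mul, hq, one_mul]

theorem kl_deriv_along_replicator_general
    {Φ : Type*} [Fintype Φ]
    (pstar : Φ → ℝ) (hpstar_sum : ∑ φ, pstar φ = 1)
    (p : ℝ → Φ → ℝ) (hppos : ∀ t φ, 0 < p t φ)
    (u : ℝ → Φ → ℝ)
    (hdyn : ∀ t φ, HasDerivAt (fun s => p s φ)
      (p t φ * (u t φ - ∑ φ', p t φ' * u t φ')) t) :
    ∀ t : ℝ, HasDerivAt (fun s => ∑ φ, pstar φ * Real.log (pstar φ / p s φ))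
      ((∑ φ, p t φ * u t φ) - ∑ φ, pstar φ * u t φ) t := by
  intro t
  have hterm : ∀ φ ∈ univ, HasDerivAt (fun s => pstar φ * Real.log (pstar φ / p s φ))
      (-(pstar φ * (u t φ - ∑ φ', p t φ' * u t φ'))) t := fun φ _ =>
    (hdyn t φ).const_mul_log_const_div_of_mul_self (pstar φ) (hppos t φ).ne'
  rw [← sum_neg_mul_sub_const univ pstar (u t) hpstar_sum]
  exact HasDerivAt.fun_sum hterm

/-- Derivative of the KL divergence to a fixed probability vector `p*` along the
(single-population) replicator dynamics with time-dependent payoff `u`: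
`d/dt D_KL(p* ‖ p t) = ∑ φ, p t φ * u t φ - ∑ φ, p* φ * u t φ`. -/
theorem kl_deriv_along_replicator
    {Φ : Type*} [Fintype Φ] [Nonempty Φ]
    (pstar : Φ → ℝ) (hpstar_nonneg : ∀ φ, 0 ≤ pstar φ) (hpstar_sum : ∑ φ, pstar φ = 1)
    (p : ℝ → Φ → ℝ) (hppos : ∀ t φ, 0 < p t φ)
    (u : ℝ → Φ → ℝ) (hu : ∀ φ, Continuous fun t => u t φ)
    (hdyn : ∀ t φ, HasDerivAt (fun s => p s φ)
      (p t φ * (u t φ - ∑ φ', p t φ' * u t φ')) t) :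
    ∀ t : ℝ, HasDerivAt (fun s => ∑ φ, pstar φ * Real.log (pstar φ / p s φ))
      ((∑ φ, p t φ * u t φ) - ∑ φ, pstar φ * u t φ) t :=
  kl_deriv_along_replicator_general pstar hpstar_sum p hppos u hdyn
end
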